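/- arXiv:2202.09989 — 10 statements merged into one kernel-verified Lean document; each statement's English description precedes it below -/
import Mathlib

section
/- Let d, s, n be natural numbers with d ≥ 1 and d ≤ s ≤ n. Then C(s,d)·C(n-d,d) ≥ C(n,d)·C(s-d,d), where C(a,b) denotes the binomial coefficient. -/
theorem choose_mul_choose_ge (d s n : ℕ) (hd : 1 ≤ d) (hds : d ≤ s) (hsn : s ≤ n) :
    s.choose d * (n - d).choose d ≥ n.choose d * (s - d).choose d := by
  obtain ⟨k, rfl⟩ : ∃ k, n = s + k := ⟨n - s, by omega⟩
  rw [show s + k - d = s - d + k by omega]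
  clear hsn
  induction k with
  | zero => simp
  | succ k ih =>
    by_cases h2 : s < 2 * d
    · have h0 : (s - d).choose d = 0 := Nat.choose_eq_zero_of_lt (by omega)
      simp [h0]
    · push_neg at h2
      obtain ⟨a, ha⟩ : ∃ a, s - d + k = a + d := ⟨s - 2*d + k, by omega⟩
      have hs : s + k = a + 2*d := by omega
      rw [ha, hs] at ih
      rw [show s - d + (k+1) = (a+d) + 1 by omega, show s + (k+1) = (a+2*d)+1 by omega]
      refine Nat.le_of_mul_le_mul_right ?_ (show 0 < (a+1)*(a+d+1) by positivity)
      have e1 : (a+d).choose d * (a+d+1) = ((a+d)+1).choose d * (a+1) := by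
        have h := Nat.choose_mul_succ_eq (a+d) d
        have hh : a + d + 1 - d = a + 1 := by omega
        rw [hh] at h; exact h
      have e2 : (a+2*d).choose d * (a+2*d+1) = ((a+2*d)+1).choose d * (a+d+1) := by
        have h := Nat.choose_mul_succ_eq (a+2*d) d
        have hh : a + 2*d + 1 - d = a + d + 1 := by omega
        rw [hh] at h; exact h
      have key : (a+2*d+1)*(a+1) ≤ (a+d+1)*(a+d+1) := by nlinarith
      calc (a+2*d+1).choose d * (s-d).choose d * ((a+1)*(a+d+1))
          = ((a+2*d).choose d * (a+2*d+1)) * (s-d).choose d * (a+1) := by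
            rw [e2]; ring
        _ = ((a+2*d).choose d * (s-d).choose d) * ((a+2*d+1)*(a+1)) := by ring
        _ ≤ (s.choose d * (a+d).choose d) * ((a+2*d+1)*(a+1)) :=
            Nat.mul_le_mul_right _ ih
        _ ≤ (s.choose d * (a+d).choose d) * ((a+d+1)*(a+d+1)) :=
            Nat.mul_le_mul_left _ key
        _ = s.choose d * ((a+d).choose d * (a+d+1)) * (a+d+1) := by ring
        _ = s.choose d * ((a+d+1).choose d * (a+1)) * (a+d+1) := by rw [e1]
        _ = s.choose d * (a+d+1).choose d * ((a+1)*(a+d+1)) := by ring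
end

section
/- Let p be a real number with 0 < p < 1 and let d be a real number with d ≥ 2. Then the function f(x) = ((1-p^d)/(1-p^{d-x}))^{1/x} is monotone increasing on the interval [1, d-1]. -/
theorem bdf_monotone (p d : ℝ) (hp0 : 0 < p) (hp1 : p < 1) (hd : 2 ≤ d) :
    MonotoneOn (fun x : ℝ => ((1 - p ^ d) / (1 - p ^ (d - x))) ^ (1 / x))
      (Set.Icc 1 (d - 1)) := by
  intro x hx y hy hxy
  obtain ⟨hx1, hxd⟩ := hx
  obtain ⟨hy1, hyd⟩ := hy
  have hx0 : (0:ℝ) < x := lt_of_lt_of_le one_pos hx1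
  have hy0 : (0:ℝ) < y := lt_of_lt_of_le one_pos hy1
  have hpd : p ^ d < 1 := Real.rpow_lt_one hp0.le hp1 (by linarith)
  have hA : 0 < 1 - p ^ d := by linarith
  have hBx : 0 < 1 - p ^ (d - x) := by
    have : p ^ (d - x) < 1 := Real.rpow_lt_one hp0.le hp1 (by linarith)
    linarith
  have hBy : 0 < 1 - p ^ (d - y) := by
    have : p ^ (d - y) < 1 := Real.rpow_lt_one hp0.le hp1 (by linarith)
    linarith
  have hByA : 1 - p ^ (d - y) ≤ 1 - p ^ d := by
    have : p ^ d ≤ p ^ (d - y) :=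
      Real.rpow_le_rpow_of_exponent_ge hp0 hp1.le (by linarith)
    linarith
  obtain ⟨t, ht⟩ : ∃ t : ℝ, t = x / y := ⟨x / y, rfl⟩
  have ht0 : 0 ≤ t := by rw [ht]; exact div_nonneg hx0.le hy0.le
  have ht1 : t ≤ 1 := by rw [ht, div_le_one hy0]; exact hxy
  have htc : t * y = x := by rw [ht]; exact div_mul_cancel₀ x hy0.ne'
  have ht1' : (0:ℝ) ≤ 1 - t := by linarith
  -- Step 1: convexity of exp gives p^(d-x) ≤ t * p^(d-y) + (1-t) * p^d
  have hconv : p ^ (d - x) ≤ t * p ^ (d - y) + (1 - t) * p ^ d := by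
    have h2 := convexOn_exp.2 (Set.mem_univ ((d - y) * Real.log p))
      (Set.mem_univ (d * Real.log p)) ht0 ht1' (by ring)
    simp only [smul_eq_mul] at h2
    rw [Real.rpow_def_of_pos hp0, Real.rpow_def_of_pos hp0, Real.rpow_def_of_pos hp0]
    have h1 : Real.log p * (d - x)
        = t * ((d - y) * Real.log p) + (1 - t) * (d * Real.log p) := by
      linear_combination Real.log p * htc
    rw [h1, mul_comm (Real.log p) (d - y), mul_comm (Real.log p) d]
    exact h2
  -- Step 2: so 1 - p^(d-x) ≥ t * (1 - p^(d-y)) + (1-t) * (1 - p^d)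
  have hB : t * (1 - p ^ (d - y)) + (1 - t) * (1 - p ^ d) ≤ 1 - p ^ (d - x) := by
    nlinarith
  have hBpos : 0 < t * (1 - p ^ (d - y)) + (1 - t) * (1 - p ^ d) := by
    have h1 : (1 - t) * (1 - p ^ (d - y)) ≤ (1 - t) * (1 - p ^ d) :=
      mul_le_mul_of_nonneg_left hByA ht1'
    have h2 : 0 ≤ t * (1 - p ^ (d - y)) := mul_nonneg ht0 hBy.le
    nlinarith
  -- Step 3: concavity of log
  have hlog : t * Real.log (1 - p ^ (d - y)) + (1 - t) * Real.log (1 - p ^ d)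
      ≤ Real.log (1 - p ^ (d - x)) := by
    have hcc := strictConcaveOn_log_Ioi.concaveOn.2 (Set.mem_Ioi.2 hBy)
      (Set.mem_Ioi.2 hA) ht0 ht1' (by ring)
    simp only [smul_eq_mul] at hcc
    exact hcc.trans (Real.log_le_log hBpos hB)
  -- Step 4: key inequality
  have key : (Real.log (1 - p ^ d) - Real.log (1 - p ^ (d - x))) * y
      ≤ (Real.log (1 - p ^ d) - Real.log (1 - p ^ (d - y))) * x := by
    have h5 := mul_le_mul_of_nonneg_left hlog hy0.le
    have h6 : y * (t * Real.log (1 - p ^ (d - y)) + (1 - t) * Real.log (1 - p ^ d))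
        = x * Real.log (1 - p ^ (d - y)) + (y - x) * Real.log (1 - p ^ d) := by
      linear_combination (Real.log (1 - p ^ (d - y)) - Real.log (1 - p ^ d)) * htc
    rw [h6] at h5
    linarith
  -- Finish
  simp only
  rw [Real.rpow_def_of_pos (div_pos hA hBx), Real.rpow_def_of_pos (div_pos hA hBy)]
  apply Real.exp_le_exp.2
  rw [Real.log_div hA.ne' hBx.ne', Real.log_div hA.ne' hBy.ne', mul_one_div, mul_one_div]
  exact (div_le_div_iff₀ hx0 hy0).2 key
end

section
/- Let p ∈ (0,1) be real, and let Δ ≥ 1, d⁻, d, n be natural numbers with 2 ≤ d⁻ ≤ d ≤ n. Set A = min{(Δ-1)·d/(d⁻-1), Δ·n/d⁻} (as a real number). Then for every function a : {0,1,…,d⁻-1} → ℝ with a_i ≥ 0 for all i, Σ_{i=0}^{d⁻-1} i·a_i ≤ (Δ-1)·d, and Σ_{i=0}^{d⁻-1} a_i ≤ Δ·n/d⁻, one has Π_{i=0}^{d⁻-1} (1-p^{d⁻-i})^{a_i} ≥ (1-p)^A · (1-p^{d⁻})^{Δ·n/d⁻ - A}, where all powers with real exponents are real powers (rpow). -/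
/-!
Writing `dm - i = (1 - wᵢ) * dm + wᵢ * 1` with `wᵢ = i / (dm - 1)`, log-concavity of
`x ↦ 1 - p ^ x` bounds each factor: `1 - p ^ (dm - i) ≥ (1 - p) ^ wᵢ * (1 - p ^ dm) ^ (1 - wᵢ)`.
Hence the product is at least `(1 - p) ^ M * (1 - p ^ dm) ^ (T - M)` with `T = ∑ aᵢ ≤ Δ n / dm`
and `M = ∑ i aᵢ / (dm - 1) ≤ A`. Since `1 - p ≤ 1 - p ^ dm ≤ 1`, raising the exponent of the
smaller base to `A` and the total exponent to `Δ n / dm` only decreases this bound.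
-/

open Finset

theorem Real.one_sub_rpow_geom_mean_le {p w x y : ℝ} (hp0 : 0 < p) (hp1 : p ≤ 1)
    (hw0 : 0 ≤ w) (hw1 : w ≤ 1) (hx : 0 ≤ x) (hy : 0 ≤ y) :
    (1 - p ^ x) ^ (1 - w) * (1 - p ^ y) ^ w ≤ 1 - p ^ ((1 - w) * x + w * y) := by
  have hconv : p ^ ((1 - w) * x + w * y) ≤ (1 - w) * p ^ x + w * p ^ y :=
    (convexOn_rpow_left hp0).2 (Set.mem_univ x) (Set.mem_univ y) (by linarith) hw0 (by ring)
  have hpx : p ^ x ≤ 1 := Real.rpow_le_one hp0.le hp1 hx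
  have hpy : p ^ y ≤ 1 := Real.rpow_le_one hp0.le hp1 hy
  calc (1 - p ^ x) ^ (1 - w) * (1 - p ^ y) ^ w
      ≤ (1 - w) * (1 - p ^ x) + w * (1 - p ^ y) :=
        Real.geom_mean_le_arith_mean2_weighted (by linarith) hw0 (by linarith) (by linarith)
          (by ring)
    _ = 1 - ((1 - w) * p ^ x + w * p ^ y) := by ring
    _ ≤ 1 - p ^ ((1 - w) * x + w * y) := by linarith

theorem Real.rpow_sum_mul_rpow_sum_le_prod_rpow {ι : Type*} {s : Finset ι} {x y : ℝ}
    (hx : 0 < x) (hy : 0 < y) {u v a f : ι → ℝ} (ha : ∀ i ∈ s, 0 ≤ a i)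
    (hf : ∀ i ∈ s, x ^ u i * y ^ v i ≤ f i) :
    x ^ (∑ i ∈ s, u i * a i) * y ^ (∑ i ∈ s, v i * a i) ≤ ∏ i ∈ s, f i ^ a i := by
  rw [Real.rpow_sum_of_pos hx, Real.rpow_sum_of_pos hy, ← prod_mul_distrib]
  refine prod_le_prod (fun i _ => by positivity) fun i hi => ?_
  rw [Real.rpow_mul hx.le, Real.rpow_mul hy.le, ← Real.mul_rpow (by positivity) (by positivity)]
  exact Real.rpow_le_rpow (by positivity) (hf i hi) (ha i hi)

theorem Real.rpow_mul_rpow_sub_le {x y A S M T : ℝ} (hx : 0 < x) (hxy : x ≤ y) (hy : y ≤ 1)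
    (hMA : M ≤ A) (hTS : T ≤ S) :
    x ^ A * y ^ (S - A) ≤ x ^ M * y ^ (T - M) := by
  have hy0 : 0 < y := hx.trans_le hxy
  calc x ^ A * y ^ (S - A) = x ^ M * (x ^ (A - M) * y ^ (S - A)) := by
        rw [← mul_assoc, ← Real.rpow_add hx]; ring_nf
    _ ≤ x ^ M * (y ^ (A - M) * y ^ (S - A)) := by
        gcongr
    _ = x ^ M * y ^ (S - M) := by rw [← Real.rpow_add hy0]; ring_nf
    _ ≤ x ^ M * y ^ (T - M) := by
        have : y ^ (S - M) ≤ y ^ (T - M) := Real.rpow_le_rpow_of_exponent_ge hy0 hy (by linarith)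
        gcongr

theorem one_sub_pow_sub_ge_geom_mean {p : ℝ} (hp0 : 0 < p) (hp1 : p ≤ 1) {m i : ℕ}
    (hm : 2 ≤ m) (hi : i < m) :
    (1 - p) ^ ((i : ℝ) / (m - 1)) * (1 - p ^ m) ^ (1 - (i : ℝ) / (m - 1)) ≤ 1 - p ^ (m - i) := by
  have hc : (0 : ℝ) < m - 1 := by linarith [show (2 : ℝ) ≤ m by exact_mod_cast hm]
  have hi' : (i : ℝ) + 1 ≤ m := by exact_mod_cast hi
  have hw1 : (i : ℝ) / (m - 1) ≤ 1 := (div_le_one hc).2 (by linarith)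
  have hexp : (1 - (i : ℝ) / (m - 1)) * m + (i : ℝ) / (m - 1) * 1 = ((m - i : ℕ) : ℝ) := by
    rw [Nat.cast_sub hi.le]
    field_simp [hc.ne']
    ring
  have := Real.one_sub_rpow_geom_mean_le hp0 hp1 (div_nonneg (Nat.cast_nonneg i) hc.le) hw1
    (Nat.cast_nonneg m) zero_le_one
  rwa [hexp, Real.rpow_natCast, Real.rpow_natCast, Real.rpow_one, mul_comm] at this

theorem closed_form_nb_general (p : ℝ) (hp0 : 0 < p) (hp1 : p < 1)
    (Δ dm d n : ℕ) (hdm : 2 ≤ dm)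
    (A : ℝ) (hA : A = min (((Δ : ℝ) - 1) * d / ((dm : ℝ) - 1)) ((Δ : ℝ) * n / dm))
    (a : ℕ → ℝ) (ha : ∀ i, 0 ≤ a i)
    (h1 : ∑ i ∈ Finset.range dm, (i : ℝ) * a i ≤ ((Δ : ℝ) - 1) * d)
    (h2 : ∑ i ∈ Finset.range dm, a i ≤ (Δ : ℝ) * n / dm) :
    ∏ i ∈ Finset.range dm, (1 - p ^ (dm - i)) ^ (a i) ≥
      (1 - p) ^ A * (1 - p ^ dm) ^ ((Δ : ℝ) * n / dm - A) := by
  have hprod := Real.rpow_sum_mul_rpow_sum_le_prod_rpow (sub_pos.2 hp1)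
    (sub_pos.2 (pow_lt_one₀ hp0.le hp1 (by omega))) (fun i _ => ha i)
    fun i hi => one_sub_pow_sub_ge_geom_mean hp0 hp1.le hdm (mem_range.mp hi)
  set M := ∑ i ∈ range dm, (i : ℝ) / (dm - 1) * a i
  have hMT : M ≤ ∑ i ∈ range dm, a i := sum_le_sum fun i hi => by
    have : (i : ℝ) + 1 ≤ dm := by exact_mod_cast mem_range.mp hi
    exact mul_le_of_le_one_left (ha i) (div_le_one_of_le₀ (by linarith) (by linarith))
  have hN : ∑ i ∈ range dm, (1 - (i : ℝ) / (dm - 1)) * a i = ∑ i ∈ range dm, a i - M := by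
    rw [← sum_sub_distrib]
    exact sum_congr rfl fun i _ => by ring
  rw [hN] at hprod
  refine le_trans (Real.rpow_mul_rpow_sub_le (sub_pos.2 hp1) ?_ ?_ ?_ h2) hprod
  · linarith [pow_le_of_le_one hp0.le hp1.le (show dm ≠ 0 by omega)]
  · linarith [pow_nonneg hp0.le dm]
  · have hM : M = (∑ i ∈ range dm, (i : ℝ) * a i) / (dm - 1) := by
      rw [sum_div]
      exact sum_congr rfl fun i _ => by ring
    have hc : (0 : ℝ) ≤ dm - 1 := by linarith [show (2 : ℝ) ≤ dm by exact_mod_cast hdm]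
    rw [hA]
    exact le_min (hM ▸ div_le_div_of_nonneg_right h1 hc) (hMT.trans h2)

theorem closed_form_nb (p : ℝ) (hp0 : 0 < p) (hp1 : p < 1)
    (Δ dm d n : ℕ) (hΔ : 1 ≤ Δ) (hdm : 2 ≤ dm) (hdmd : dm ≤ d) (hdn : d ≤ n)
    (A : ℝ) (hA : A = min (((Δ : ℝ) - 1) * d / ((dm : ℝ) - 1)) ((Δ : ℝ) * n / dm))
    (a : ℕ → ℝ) (ha : ∀ i, 0 ≤ a i)
    (h1 : ∑ i ∈ Finset.range dm, (i : ℝ) * a i ≤ ((Δ : ℝ) - 1) * d)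
    (h2 : ∑ i ∈ Finset.range dm, a i ≤ (Δ : ℝ) * n / dm) :
    ∏ i ∈ Finset.range dm, (1 - p ^ (dm - i)) ^ (a i) ≥
      (1 - p) ^ A * (1 - p ^ dm) ^ ((Δ : ℝ) * n / dm - A) :=
  closed_form_nb_general p hp0 hp1 Δ dm d n hdm A hA a ha h1 h2
end

section
/- Let p ∈ (0,1) be real and let Δ, d⁻, d, n be natural numbers with Δ ≥ 2, 2 ≤ d⁻ ≤ d, and n ≥ 1. Then (1-p)^{(Δ-1)·d/(d⁻-1)} · (1-p^{d⁻})^{Δ·n/d⁻ - (Δ-1)·d/(d⁻-1)} ≥ ( (1-p)^{d⁻/(d⁻-1)} · (1-p^{d⁻})^{2n/d⁻ - d⁻/(d⁻-1)} )^{(Δ-1)·d/d⁻}, where all powers with real exponents are real powers (rpow). -/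
/-! Both sides share the factor `(1 - p) ^ ((Δ - 1) d / (d⁻ - 1))` once the outer power on the
right is distributed, so the claim reduces to comparing two powers of `1 - p ^ d⁻ ∈ (0, 1]`.
The right-hand exponent is the larger one because `Δ ≤ 2 (Δ - 1)` and `d⁻ ≤ d`. -/

namespace Real

theorem mul_rpow_rpow {a b : ℝ} (ha : 0 ≤ a) (hb : 0 ≤ b) (s t u : ℝ) :
    (a ^ s * b ^ t) ^ u = a ^ (s * u) * b ^ (t * u) := by
  rw [mul_rpow (rpow_nonneg ha s) (rpow_nonneg hb t), ← rpow_mul ha, ← rpow_mul hb]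

end Real

theorem mul_div_le_two_mul_div_mul_sub_one_mul_div {Δ m d n : ℝ} (hΔ : 2 ≤ Δ) (hm : 0 < m)
    (hmd : m ≤ d) (hn : 0 ≤ n) :
    Δ * n / m ≤ 2 * n / m * ((Δ - 1) * d / m) := by
  have hdm : 1 ≤ d / m := (one_le_div hm).2 hmd
  calc Δ * n / m = n / m * Δ := by ring
    _ ≤ n / m * (2 * (Δ - 1) * (d / m)) := by
        gcongr
        nlinarith
    _ = 2 * n / m * ((Δ - 1) * d / m) := by ring

theorem exp_nb_general (p : ℝ) (hp0 : 0 < p) (hp1 : p < 1)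
    (Δ dm d n : ℕ) (hΔ : 2 ≤ Δ) (hdm : 2 ≤ dm) (hdmd : dm ≤ d) :
    (1 - p) ^ (((Δ : ℝ) - 1) * d / ((dm : ℝ) - 1)) *
      (1 - p ^ dm) ^ ((Δ : ℝ) * n / dm - ((Δ : ℝ) - 1) * d / ((dm : ℝ) - 1)) ≥
    ((1 - p) ^ ((dm : ℝ) / ((dm : ℝ) - 1)) *
      (1 - p ^ dm) ^ (2 * (n : ℝ) / dm - (dm : ℝ) / ((dm : ℝ) - 1)))
        ^ (((Δ : ℝ) - 1) * d / dm) := by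
  have hdm0 : (dm : ℝ) ≠ 0 := by positivity
  have hb0 : 0 < 1 - p ^ dm := sub_pos.2 (pow_lt_one₀ hp0.le hp1 (by omega))
  have hb1 : 1 - p ^ dm ≤ 1 := sub_le_self _ (pow_nonneg hp0.le dm)
  rw [Real.mul_rpow_rpow (by linarith) hb0.le, div_mul_div_cancel₀' hdm0]
  refine mul_le_mul_of_nonneg_left (Real.rpow_le_rpow_of_exponent_ge hb0 hb1 ?_) (by positivity)
  rw [sub_mul (2 * (n : ℝ) / dm), div_mul_div_cancel₀' hdm0]
  gcongr
  exact mul_div_le_two_mul_div_mul_sub_one_mul_div (by exact_mod_cast hΔ) (by positivity)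
    (by exact_mod_cast hdmd) n.cast_nonneg

theorem exp_nb (p : ℝ) (hp0 : 0 < p) (hp1 : p < 1)
    (Δ dm d n : ℕ) (hΔ : 2 ≤ Δ) (hdm : 2 ≤ dm) (hdmd : dm ≤ d) (hn : 1 ≤ n) :
    (1 - p) ^ (((Δ : ℝ) - 1) * d / ((dm : ℝ) - 1)) *
      (1 - p ^ dm) ^ ((Δ : ℝ) * n / dm - ((Δ : ℝ) - 1) * d / ((dm : ℝ) - 1)) ≥
    ((1 - p) ^ ((dm : ℝ) / ((dm : ℝ) - 1)) *
      (1 - p ^ dm) ^ (2 * (n : ℝ) / dm - (dm : ℝ) / ((dm : ℝ) - 1)))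
        ^ (((Δ : ℝ) - 1) * d / dm) :=
  exp_nb_general p hp0 hp1 Δ dm d n hΔ hdm hdmd
end

section
/- Let n and d be natural numbers with n ≥ 100 and 2 ≤ d ≤ n. Then (d/(d-1))·n^{-1/d} + 1/d ≤ (n/(n-1))·n^{-1/n} + 1/n ≤ 1 - (ln n)/(2n), where n^{-1/d} and n^{-1/n} denote real powers and ln is the natural logarithm. -/
/-!
Write `f(D) = D/(D-1) · N^(-1/D) + 1/D`. Since `N^(-1/(D+1)) ≥ N^(-1/D) · (1 + log N/(D(D+1)))`,
`f(D) ≤ f(D+1)` as soon as `(log N - 2) · N^(-1/D) ≥ 1`, and this condition persists as `D`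
grows; so from the first such `D` on, `f` increases up to `f(N)`. Before it, `N^(-1/D) < 2/5`
(or `D = 2`, where `N^(-1/2) ≤ 1/10`), which forces `f(D) ≤ 14/15 < 1 - log N/N ≤ f(N)`.
The upper bound on `f(N)` is `e^(-t) ≤ 1 - t + t²` at `t = log N/N ≤ 1/20`, using
`log N ≥ 9/2`.
-/

open Real

noncomputable def lpBound (N D : ℝ) : ℝ := D / (D - 1) * N ^ (-1 / D) + 1 / D

theorem nine_halves_lt_log_hundred : 9 / 2 < log 100 := by
  have h : exp 9 < 10000 := calc
    exp 9 = exp 1 ^ 9 := by simp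
    _ < 2.7182818286 ^ 9 := by gcongr; exact exp_one_lt_d9
    _ < 10000 := by norm_num
  have hlog : 9 < log (100 ^ 2) := (lt_log_iff_exp_lt (by norm_num)).2 (by norm_num [h])
  rw [log_pow, Nat.cast_ofNat] at hlog
  linarith

theorem log_hundred_lt_five : log 100 < 5 := by
  rw [log_lt_iff_lt_exp (by norm_num)]
  calc (100 : ℝ) < 2.7182818283 ^ 5 := by norm_num
    _ < exp 1 ^ 5 := by gcongr; exact exp_one_gt_d9
    _ = exp 5 := by simp

theorem nine_halves_le_log {N : ℝ} (hN : 100 ≤ N) : 9 / 2 ≤ log N :=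
  nine_halves_lt_log_hundred.le.trans (log_le_log (by norm_num) hN)

theorem log_div_self_le_of_hundred_le {N : ℝ} (hN : 100 ≤ N) : log N / N ≤ 1 / 20 := by
  have he : exp 1 ≤ 100 := by linarith [exp_one_lt_d9]
  calc log N / N ≤ log 100 / 100 := log_div_self_antitoneOn he (he.trans hN) hN
    _ ≤ 1 / 20 := by linarith [log_hundred_lt_five]

theorem one_add_mul_log_le_rpow {N : ℝ} (hN : 0 < N) (y : ℝ) : 1 + y * log N ≤ N ^ y := by
  rw [rpow_def_of_pos hN, mul_comm]
  linarith [add_one_le_exp (log N * y)]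

theorem rpow_neg_one_div_le_rpow_neg_one_div {N D D' : ℝ} (hN : 1 ≤ N) (hD : 0 < D)
    (hDD' : D ≤ D') : N ^ (-1 / D) ≤ N ^ (-1 / D') := by
  apply rpow_le_rpow_of_exponent_le hN
  rw [neg_div, neg_div, neg_le_neg_iff]
  exact one_div_le_one_div_of_le hD hDD'

theorem rpow_neg_one_div_mul_le {N D : ℝ} (hN : 0 < N) (hD : 0 < D) :
    N ^ (-1 / D) * (1 + log N / (D * (D + 1))) ≤ N ^ (-1 / (D + 1)) := by
  have hsplit : -1 / (D + 1) = -1 / D + 1 / (D * (D + 1)) := by field_simp; ring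
  rw [hsplit, rpow_add hN]
  gcongr
  simpa [div_eq_mul_inv, mul_comm] using one_add_mul_log_le_rpow hN (1 / (D * (D + 1)))

theorem lpBound_le_lpBound_add_one {N D : ℝ} (hN : 0 < N) (hD : 2 ≤ D)
    (h : 1 ≤ (log N - 2) * N ^ (-1 / D)) : lpBound N D ≤ lpBound N (D + 1) := by
  set L := log N
  set a := N ^ (-1 / D)
  have ha : 0 < a := rpow_pos_of_pos hN _
  have hL : 0 < L - 2 := pos_of_mul_pos_left (one_pos.trans_le h) ha.le
  have hD1 : 0 < D - 1 := by linarith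
  have hgain : D / (D - 1) * a + 1 / D ≤
      (D + 1) / D * (a * (1 + L / (D * (D + 1)))) + 1 / (D + 1) := by
    rw [← sub_nonneg]
    have hid : (D + 1) / D * (a * (1 + L / (D * (D + 1)))) + 1 / (D + 1) -
          (D / (D - 1) * a + 1 / D) =
        (a * ((L - 2) * (D - 1) + (D - 2) * (D + 1)) + ((L - 2) * a - 1) * (D * (D - 1)))
          / (D ^ 2 * (D - 1) * (D + 1)) := by
      field_simp; ring
    have hslack : 0 ≤ (L - 2) * a - 1 := by linarith
    have hD2 : 0 ≤ (D - 2) * (D + 1) := by nlinarith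
    rw [hid]
    positivity
  calc lpBound N D ≤ (D + 1) / D * (a * (1 + L / (D * (D + 1)))) + 1 / (D + 1) := hgain
    _ ≤ (D + 1) / D * N ^ (-1 / (D + 1)) + 1 / (D + 1) := by
      gcongr; exact rpow_neg_one_div_mul_le hN (by linarith)
    _ = lpBound N (D + 1) := by rw [lpBound, add_sub_cancel_right]

theorem lpBound_le_lpBound_of_le {N : ℝ} (hN : 1 ≤ N) {d m : ℕ} (hd : 2 ≤ d) (hdm : d ≤ m)
    (h : 1 ≤ (log N - 2) * N ^ (-1 / (d : ℝ))) : lpBound N d ≤ lpBound N m := by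
  have hL : 0 ≤ log N - 2 :=
    (pos_of_mul_pos_left (one_pos.trans_le h) (rpow_nonneg (by linarith) _)).le
  induction m, hdm using Nat.le_induction with
  | base => exact le_rfl
  | succ m hdm ih =>
    have hm : 1 ≤ (log N - 2) * N ^ (-1 / (m : ℝ)) := by
      refine h.trans (mul_le_mul_of_nonneg_left ?_ hL)
      exact rpow_neg_one_div_le_rpow_neg_one_div hN (by positivity) (by exact_mod_cast hdm)
    calc lpBound N d ≤ lpBound N m := ih
      _ ≤ lpBound N (m + 1) :=
        lpBound_le_lpBound_add_one (by linarith) (by exact_mod_cast hd.trans hdm) hm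
      _ = lpBound N (m + 1 : ℕ) := by push_cast; rfl

theorem lpBound_two_le {N : ℝ} (hN : 100 ≤ N) : lpBound N 2 ≤ 7 / 10 := by
  have ha : N ^ (-1 / 2 : ℝ) ≤ 1 / 10 := by
    have hsq : (N ^ (-1 / 2 : ℝ)) ^ 2 = N⁻¹ := by
      rw [← rpow_mul_natCast (by linarith), show (-1 / 2 : ℝ) * (2 : ℕ) = -1 by norm_num,
        rpow_neg_one]
    have hinv : N⁻¹ ≤ 1 / 100 := by rw [one_div]; exact inv_anti₀ (by norm_num) hN
    nlinarith [rpow_nonneg (show (0 : ℝ) ≤ N by linarith) (-1 / 2)]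
  calc lpBound N 2 = 2 * N ^ (-1 / 2 : ℝ) + 1 / 2 := by norm_num [lpBound]
    _ ≤ 7 / 10 := by linarith

theorem lpBound_le_of_not_growth {N D : ℝ} (hN : 100 ≤ N) (hD : 3 ≤ D)
    (h : (log N - 2) * N ^ (-1 / D) < 1) : lpBound N D ≤ 14 / 15 := by
  have ha0 : 0 ≤ N ^ (-1 / D) := rpow_nonneg (by linarith) _
  have ha : N ^ (-1 / D) ≤ 2 / 5 := by nlinarith [nine_halves_le_log hN]
  have hfrac : D / (D - 1) ≤ 3 / 2 := by rw [div_le_div_iff₀] <;> linarith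
  calc lpBound N D ≤ 3 / 2 * (2 / 5) + 1 / 3 := by rw [lpBound]; gcongr
    _ = 14 / 15 := by norm_num

theorem one_sub_log_div_self_le_lpBound_self {N : ℝ} (hN : 1 < N) :
    1 - log N / N ≤ lpBound N N := by
  have ha : 1 - log N / N ≤ N ^ (-1 / N) := by
    simpa [neg_div, div_eq_mul_inv, mul_comm, sub_eq_add_neg] using
      one_add_mul_log_le_rpow (by linarith) (-1 / N)
  have hfrac : 1 ≤ N / (N - 1) := by rw [le_div_iff₀] <;> linarith
  calc 1 - log N / N ≤ N / (N - 1) * N ^ (-1 / N) :=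
      ha.trans (le_mul_of_one_le_left (rpow_nonneg (by linarith) _) hfrac)
    _ ≤ lpBound N N := le_add_of_nonneg_right (by positivity)

theorem exp_neg_le_one_sub_add_sq {t : ℝ} (ht0 : 0 ≤ t) (ht1 : t ≤ 1) :
    exp (-t) ≤ 1 - t + t ^ 2 := by
  have h := abs_exp_sub_one_sub_id_le (x := -t) (by rwa [abs_neg, abs_of_nonneg ht0])
  linarith [(abs_le.1 h).2, neg_sq t]

theorem lpBound_self_le {N : ℝ} (hN : 100 ≤ N) : lpBound N N ≤ 1 - log N / (2 * N) := by
  set t := log N / N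
  have hN0 : 0 < N := by linarith
  have ht0 : 0 ≤ t := div_nonneg (log_nonneg (by linarith)) hN0.le
  have ht : t ≤ 1 / 20 := log_div_self_le_of_hundred_le hN
  have hNt : N * t = log N := mul_div_cancel₀ _ hN0.ne'
  have hexp : N ^ (-1 / N) ≤ 1 - t + t ^ 2 := by
    rw [rpow_def_of_pos hN0, show log N * (-1 / N) = -t by ring]
    exact exp_neg_le_one_sub_add_sq ht0 (by linarith)
  have hmargin : 2 ≤ N * t * (1 / 2 - t) := by
    rw [hNt]; nlinarith [nine_halves_le_log hN]
  have hN1 : 0 < N - 1 := by linarith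
  calc lpBound N N ≤ N / (N - 1) * (1 - t + t ^ 2) + 1 / N := by rw [lpBound]; gcongr
    _ ≤ 1 - t / 2 := by
      rw [div_mul_eq_mul_div, div_add_div _ _ hN1.ne' hN0.ne', div_le_iff₀ (by positivity)]
      nlinarith [mul_le_mul_of_nonneg_left hmargin hN0.le]
    _ = 1 - log N / (2 * N) := by ring

theorem sufficient_bound_lp (n d : ℕ) (hn : 100 ≤ n) (hd2 : 2 ≤ d) (hdn : d ≤ n) :
    (d : ℝ) / ((d : ℝ) - 1) * (n : ℝ) ^ (-(1 : ℝ) / d) + 1 / d ≤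
      (n : ℝ) / ((n : ℝ) - 1) * (n : ℝ) ^ (-(1 : ℝ) / n) + 1 / n ∧
    (n : ℝ) / ((n : ℝ) - 1) * (n : ℝ) ^ (-(1 : ℝ) / n) + 1 / n ≤
      1 - Real.log n / (2 * n) := by
  have hN : (100 : ℝ) ≤ n := by exact_mod_cast hn
  refine ⟨?_, lpBound_self_le hN⟩
  change lpBound n d ≤ lpBound n n
  by_cases hgrowth : 1 ≤ (log n - 2) * (n : ℝ) ^ (-1 / (d : ℝ))
  · exact lpBound_le_lpBound_of_le (by linarith) hd2 hdn hgrowth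
  · have hself : 19 / 20 ≤ lpBound n n := by
      linarith [one_sub_log_div_self_le_lpBound_self (N := n) (by linarith),
        log_div_self_le_of_hundred_le hN]
    rcases hd2.eq_or_lt with rfl | hd3
    · exact_mod_cast (lpBound_two_le hN).trans (by linarith)
    · have hD : (3 : ℝ) ≤ d := by exact_mod_cast hd3
      linarith [lpBound_le_of_not_growth hN hD (not_le.1 hgrowth)]
end

section
/- For every natural number n ≥ 10, n^{-1/n} ≤ 1 - (3/4)·(ln n)/n, where n^{-1/n} denotes the real power and ln is the natural logarithm. -/
/-! With `t = log n / n` we have `n ^ (-1 / n) = exp (-t) ≤ 1 / (1 + t)`, and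
`1 / (1 + t) ≤ 1 - 3 t / 4` exactly when `t ≤ 1 / 3`; for `n ≥ 10` this bound on `t`
follows from `n ≤ (1 + n / 12) ^ 4 ≤ exp (n / 3)`. -/

open Real

lemma Real.rpow_neg_one_div_self {x : ℝ} (hx : 0 < x) :
    x ^ (-1 / x) = exp (-(log x / x)) := by
  rw [rpow_def_of_pos hx]
  congr 1
  ring

lemma Real.exp_neg_le_one_sub_three_quarters_mul {t : ℝ} (ht₀ : 0 ≤ t) (ht : t ≤ 1 / 3) :
    exp (-t) ≤ 1 - 3 / 4 * t := by
  have h_inv : exp (-t) ≤ (1 + t)⁻¹ := by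
    rw [exp_neg]
    exact inv_anti₀ (by linarith) (by linarith [add_one_le_exp t])
  have h_quad : (1 + t)⁻¹ ≤ 1 - 3 / 4 * t := by
    rw [inv_le_iff_one_le_mul₀ (by linarith)]
    nlinarith
  exact h_inv.trans h_quad

lemma Real.log_le_div_three {x : ℝ} (hx : 10 ≤ x) : log x ≤ x / 3 := by
  rw [log_le_iff_le_exp (by linarith)]
  calc x ≤ (1 + x / 12) ^ 4 := by nlinarith [sq_nonneg (x - 10)]
    _ ≤ exp (x / 12) ^ 4 := by gcongr; linarith [add_one_le_exp (x / 12)]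
    _ = exp (x / 3) := by rw [← exp_nat_mul]; ring_nf

theorem rpow_neg_inv_le (n : ℕ) (hn : 10 ≤ n) :
    (n : ℝ) ^ (-(1 : ℝ) / n) ≤ 1 - 3 / 4 * Real.log n / n := by
  have hn' : (10 : ℝ) ≤ n := by exact_mod_cast hn
  have hpos : (0 : ℝ) < n := by linarith
  have ht₀ : 0 ≤ log n / n := div_nonneg (log_nonneg (by linarith)) hpos.le
  have ht : log n / n ≤ 1 / 3 := by
    rw [div_le_iff₀ hpos]
    linarith [log_le_div_three hn']
  rw [rpow_neg_one_div_self hpos, mul_div_assoc]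
  exact exp_neg_le_one_sub_three_quarters_mul ht₀ ht
end

section
/- Let p ∈ (0,1) be real and let d, n be natural numbers with 2 ≤ d ≤ n. Then for every function a : {0,1,…,d-1} → ℝ with a_i ≥ 0 for all i, Σ_{i=0}^{d-1} i·a_i ≤ d, and Σ_{i=0}^{d-1} a_i ≤ 2n/d, one has Σ_{i=0}^{d-1} a_i·p^{d-i} ≤ (d/(d-1))·p + (2n/d - d/(d-1))·p^d. -/
/-!
By convexity of `k ↦ p ^ k`, the objective coefficient `p ^ (d - i)` lies below the chord through
`(1, p)` and `(d, p ^ d)`, which is affine in `i` with nonnegative slope `(p - p ^ d) / (d - 1)`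
and intercept `p ^ d`. This pair is a feasible solution of the dual program, and weak duality
bounds the objective by `d` times the slope plus `2n/d` times the intercept.
-/

theorem ConvexOn.mul_le_of_le_of_le {𝕜 : Type*} [Field 𝕜] [LinearOrder 𝕜] [IsStrictOrderedRing 𝕜]
    {s : Set 𝕜} {f : 𝕜 → 𝕜} (hf : ConvexOn 𝕜 s f) {x y z : 𝕜} (hx : x ∈ s) (hz : z ∈ s)
    (hxy : x ≤ y) (hyz : y ≤ z) : (z - x) * f y ≤ (z - y) * f x + (y - x) * f z := by
  rcases hxy.eq_or_lt with rfl | hxy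
  · simp
  rcases hyz.eq_or_lt with rfl | hyz
  · simp
  exact hf.secant_mono_aux1 hx hz hxy hyz

theorem pow_le_chord {p : ℝ} (hp : 0 < p) {k d : ℕ} (hk : 1 ≤ k) (hkd : k ≤ d) :
    ((d : ℝ) - 1) * p ^ k ≤ ((d : ℝ) - k) * p + ((k : ℝ) - 1) * p ^ d := by
  have h := (convexOn_rpow_left hp).mul_le_of_le_of_le (Set.mem_univ 1) (Set.mem_univ (d : ℝ))
    (Nat.one_le_cast.mpr hk) (Nat.cast_le.mpr hkd)
  simpa only [Real.rpow_natCast, Real.rpow_one] using h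

theorem pow_sub_le_affine {p : ℝ} (hp : 0 < p) {d i : ℕ} (hd : 2 ≤ d) (hi : i < d) :
    p ^ (d - i) ≤ (p - p ^ d) / ((d : ℝ) - 1) * i + p ^ d := by
  have hd1 : (0 : ℝ) < (d : ℝ) - 1 := by
    have : (2 : ℝ) ≤ d := by exact_mod_cast hd
    linarith
  have h := pow_le_chord hp (k := d - i) (by omega) (Nat.sub_le d i)
  rw [Nat.cast_sub hi.le] at h
  rw [div_mul_eq_mul_div, div_add' _ _ _ hd1.ne', le_div_iff₀ hd1]
  linarith

theorem Finset.sum_mul_le_of_le_affine {ι : Type*} {s : Finset ι} {a f w : ι → ℝ} {c e A B : ℝ}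
    (ha : ∀ i ∈ s, 0 ≤ a i) (hc : 0 ≤ c) (he : 0 ≤ e) (hf : ∀ i ∈ s, f i ≤ c * w i + e)
    (hA : ∑ i ∈ s, w i * a i ≤ A) (hB : ∑ i ∈ s, a i ≤ B) :
    ∑ i ∈ s, a i * f i ≤ c * A + e * B :=
  calc ∑ i ∈ s, a i * f i ≤ ∑ i ∈ s, (c * (w i * a i) + e * a i) :=
        Finset.sum_le_sum fun i hi => by nlinarith [ha i hi, hf i hi]
    _ = c * ∑ i ∈ s, w i * a i + e * ∑ i ∈ s, a i := by
        rw [Finset.sum_add_distrib, Finset.mul_sum, Finset.mul_sum]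
    _ ≤ c * A + e * B := by gcongr

theorem lp_general_closed_form_general (p : ℝ) (hp0 : 0 < p) (hp1 : p < 1)
    (d n : ℕ) (hd2 : 2 ≤ d)
    (a : ℕ → ℝ) (ha : ∀ i, 0 ≤ a i)
    (h1 : ∑ i ∈ Finset.range d, (i : ℝ) * a i ≤ (d : ℝ))
    (h2 : ∑ i ∈ Finset.range d, a i ≤ 2 * (n : ℝ) / d) :
    ∑ i ∈ Finset.range d, a i * p ^ (d - i) ≤
      (d : ℝ) / ((d : ℝ) - 1) * p + (2 * (n : ℝ) / d - (d : ℝ) / ((d : ℝ) - 1)) * p ^ d := by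
  have hd1 : (0 : ℝ) < (d : ℝ) - 1 := by
    have : (2 : ℝ) ≤ d := by exact_mod_cast hd2
    linarith
  have hslope : 0 ≤ (p - p ^ d) / ((d : ℝ) - 1) :=
    div_nonneg (sub_nonneg.mpr (pow_le_of_le_one hp0.le hp1.le (by omega))) hd1.le
  calc ∑ i ∈ Finset.range d, a i * p ^ (d - i)
      ≤ (p - p ^ d) / ((d : ℝ) - 1) * d + p ^ d * (2 * (n : ℝ) / d) :=
        Finset.sum_mul_le_of_le_affine (fun i _ => ha i) hslope (by positivity)
          (fun i hi => pow_sub_le_affine hp0 hd2 (Finset.mem_range.mp hi)) h1 h2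
    _ = _ := by
        field_simp
        ring

theorem lp_general_closed_form (p : ℝ) (hp0 : 0 < p) (hp1 : p < 1)
    (d n : ℕ) (hd2 : 2 ≤ d) (hdn : d ≤ n)
    (a : ℕ → ℝ) (ha : ∀ i, 0 ≤ a i)
    (h1 : ∑ i ∈ Finset.range d, (i : ℝ) * a i ≤ (d : ℝ))
    (h2 : ∑ i ∈ Finset.range d, a i ≤ 2 * (n : ℝ) / d) :
    ∑ i ∈ Finset.range d, a i * p ^ (d - i) ≤
      (d : ℝ) / ((d : ℝ) - 1) * p + (2 * (n : ℝ) / d - (d : ℝ) / ((d : ℝ) - 1)) * p ^ d :=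
  lp_general_closed_form_general p hp0 hp1 d n hd2 a ha h1 h2
end

section
/- Let n and d be natural numbers with n ≥ 100 and 2 ≤ d ≤ n. Then (d/(d-1))·(2n)^{-1/d} + 1/d ≤ 1 - (ln n)/(2n), where (2n)^{-1/d} denotes the real power and ln is the natural logarithm. -/
/-!
With `L = log (2n)` and `A = log n / (2n)` the claim is equivalent to
`exp (-L/d) ≤ (1 - 1/d) (1 - 1/d - A)`. For `d = 2` and for `3 ≤ d ≤ L` the left side is at most
`e⁻²`, resp. `e⁻¹`, which is smaller than the right side since `A ≤ 1/20`. For `L ≤ d ≤ n` we use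
`exp (-t) ≤ 1 - t + t²/2`; what remains is the nonnegativity of a concave quadratic in `d`, which
only has to be checked at the endpoints `d = L` and `d = n`.
-/

open Real

lemma exp_neg_le_one_sub_add_sq_div_two {t : ℝ} (ht : 0 ≤ t) :
    exp (-t) ≤ 1 - t + t ^ 2 / 2 := by
  have hpos : 0 < 1 + t + t ^ 2 / 2 := by positivity
  calc exp (-t) = (exp t)⁻¹ := exp_neg t
    _ ≤ (1 + t + t ^ 2 / 2)⁻¹ := inv_anti₀ hpos (quadratic_le_exp_of_nonneg ht)
    _ ≤ 1 - t + t ^ 2 / 2 := by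
      rw [inv_le_iff_one_le_mul₀ hpos]
      nlinarith [sq_nonneg (t ^ 2)]

lemma sq_log_le {x : ℝ} (hx : 1 ≤ x) : log x ^ 2 ≤ 16 / 25 * x := by
  have hs : 0 < √x := by positivity
  have hlog_sqrt : 0 ≤ log √x := log_nonneg (one_le_sqrt.2 hx)
  have hlog : log x = 2 * log √x := by
    rw [← log_rpow hs, rpow_two, sq_sqrt (by positivity)]
  have hsqrt : exp 1 * log √x ≤ √x := by
    simpa [exp_log hs] using exp_one_mul_le_exp (x := log √x)
  have he : 5 / 2 ≤ exp 1 := by linarith [exp_one_gt_d9]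
  have hle : 5 / 2 * log x ≤ 2 * √x := by
    rw [hlog]
    nlinarith
  calc log x ^ 2 = 4 / 25 * (5 / 2 * log x) ^ 2 := by ring
    _ ≤ 4 / 25 * (2 * √x) ^ 2 := by gcongr; linarith
    _ = 16 / 25 * x := by rw [mul_pow, sq_sqrt (by positivity)]; ring

lemma four_le_log {x : ℝ} (hx : 81 ≤ x) : 4 ≤ log x := by
  rw [le_log_iff_exp_le (by linarith)]
  calc exp 4 = exp 1 ^ 4 := by rw [exp_one_pow]; norm_num
    _ ≤ 3 ^ 4 := by gcongr; linarith [exp_one_lt_d9]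
    _ ≤ x := by linarith

lemma log_div_two_mul_le {x : ℝ} (hx : 100 ≤ x) : log x / (2 * x) ≤ 1 / 20 := by
  have hsq := sq_log_le (x := x) (by linarith)
  have hlog : 0 ≤ log x := log_nonneg (by linarith)
  rw [div_le_iff₀ (by linarith)]
  nlinarith

lemma nonneg_of_concave_quadratic {a b c x₀ x₁ x : ℝ} (ha : 0 ≤ a) (h₀ : x₀ ≤ x) (h₁ : x ≤ x₁)
    (hp₀ : 0 ≤ -a * x₀ ^ 2 + b * x₀ + c) (hp₁ : 0 ≤ -a * x₁ ^ 2 + b * x₁ + c) :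
    0 ≤ -a * x ^ 2 + b * x + c := by
  rcases h₀.eq_or_lt with rfl | hlt
  · exact hp₀
  -- a concave quadratic lies above its chord
  have hchord : (x₁ - x₀) * (-a * x ^ 2 + b * x + c) = (x₁ - x) * (-a * x₀ ^ 2 + b * x₀ + c)
      + (x - x₀) * (-a * x₁ ^ 2 + b * x₁ + c) + a * (x₁ - x₀) * (x - x₀) * (x₁ - x) := by ring
  have h₀₁ : 0 ≤ x₁ - x₀ := by linarith
  have hx₀ : 0 ≤ x - x₀ := by linarith
  have hx₁ : 0 ≤ x₁ - x := by linarith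
  have hprod : 0 ≤ (x₁ - x₀) * (-a * x ^ 2 + b * x + c) := by
    rw [hchord]
    have := mul_nonneg (mul_nonneg (mul_nonneg ha h₀₁) hx₀) hx₁
    nlinarith [mul_nonneg hx₁ hp₀, mul_nonneg hx₀ hp₁]
  exact (mul_nonneg_iff_of_pos_left (by linarith)).1 hprod

lemma div_sub_one_mul_add_one_div_le_one_sub {d q A : ℝ} (hd : 1 < d)
    (hq : q ≤ (1 - 1 / d) * (1 - 1 / d - A)) : d / (d - 1) * q + 1 / d ≤ 1 - A := by
  have hd1 : 0 < d - 1 := by linarith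
  calc d / (d - 1) * q + 1 / d ≤ d / (d - 1) * ((1 - 1 / d) * (1 - 1 / d - A)) + 1 / d := by
        gcongr
    _ = 1 - A := by field_simp; ring

lemma exp_neg_half_le {L A : ℝ} (hL : 4 ≤ L) (hA : A ≤ 1 / 20) :
    exp (-(L / 2)) ≤ (1 - 1 / 2) * (1 - 1 / 2 - A) :=
  calc exp (-(L / 2)) ≤ exp (-1) ^ 2 := by
        rw [← exp_nat_mul]
        exact exp_le_exp.2 (by push_cast; linarith)
    _ ≤ 0.37 ^ 2 := by gcongr; linarith [exp_neg_one_lt_d9]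
    _ ≤ (1 - 1 / 2) * (1 - 1 / 2 - A) := by linarith

lemma exp_neg_div_le_of_le {L A d : ℝ} (hd : 3 ≤ d) (hdL : d ≤ L) (hA : A ≤ 1 / 20) :
    exp (-(L / d)) ≤ (1 - 1 / d) * (1 - 1 / d - A) := by
  have hLd : 1 ≤ L / d := (one_le_div (by linarith)).2 hdL
  have hinv : 1 / d ≤ 1 / 3 := one_div_le_one_div_of_le (by norm_num) hd
  calc exp (-(L / d)) ≤ exp (-1) := exp_le_exp.2 (neg_le_neg hLd)
    _ ≤ 2 / 3 * (2 / 3 - 1 / 20) := by linarith [exp_neg_one_lt_d9]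
    _ ≤ (1 - 1 / d) * (1 - 1 / d - A) := by gcongr <;> linarith

lemma exp_neg_log_div_le {N d : ℝ} (hN : 100 ≤ N) (hLd : log (2 * N) ≤ d) (hdN : d ≤ N) :
    exp (-(log (2 * N) / d)) ≤ (1 - 1 / d) * (1 - 1 / d - log N / (2 * N)) := by
  set L := log (2 * N)
  set A := log N / (2 * N)
  have hlogN : 4 ≤ log N := four_le_log (by linarith)
  have hL : L = log 2 + log N := log_mul two_ne_zero (by positivity)
  have hL2 : L ^ 2 ≤ 16 / 25 * (2 * N) := sq_log_le (by linarith)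
  have hA0 : 0 ≤ A := by positivity
  have hA : A ≤ 1 / 20 := log_div_two_mul_le hN
  have hAN : A * N = log N / 2 := by simp only [A]; field_simp
  have hd0 : 0 < d := by linarith [log_two_gt_d9]
  have hp : 0 ≤ -A * d ^ 2 + (L - 2 + A) * d + (1 - L ^ 2 / 2) := by
    refine nonneg_of_concave_quadratic hA0 hLd hdN ?_ ?_
    · nlinarith [mul_nonneg (sub_nonneg.2 hA) (sq_nonneg L), log_two_gt_d9]
    · have hN0 : (0 : ℝ) ≤ N := by linarith
      nlinarith [mul_nonneg (sub_nonneg.2 hlogN) hN0,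
        mul_nonneg (sub_nonneg.2 log_two_gt_d9.le) hN0]
  have hgap : (1 - 1 / d) * (1 - 1 / d - A) - (1 - L / d + (L / d) ^ 2 / 2)
      = (-A * d ^ 2 + (L - 2 + A) * d + (1 - L ^ 2 / 2)) / d ^ 2 := by
    field_simp
    ring
  calc exp (-(L / d)) ≤ 1 - L / d + (L / d) ^ 2 / 2 :=
        exp_neg_le_one_sub_add_sq_div_two (div_nonneg (by linarith [log_two_gt_d9]) hd0.le)
    _ ≤ (1 - 1 / d) * (1 - 1 / d - A) := by linarith [div_nonneg hp (sq_nonneg d)]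

theorem lp2ub_nb (n d : ℕ) (hn : 100 ≤ n) (hd2 : 2 ≤ d) (hdn : d ≤ n) :
    (d : ℝ) / ((d : ℝ) - 1) * (2 * (n : ℝ)) ^ (-(1 : ℝ) / d) + 1 / d ≤
      1 - Real.log n / (2 * n) := by
  have hN : (100 : ℝ) ≤ n := by exact_mod_cast hn
  have hL : 4 ≤ log (2 * n) := four_le_log (by linarith)
  have hA : log n / (2 * n) ≤ 1 / 20 := log_div_two_mul_le hN
  rw [rpow_def_of_pos (by positivity), neg_div, mul_neg, mul_one_div]
  refine div_sub_one_mul_add_one_div_le_one_sub (by exact_mod_cast hd2) ?_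
  rcases hd2.eq_or_lt with rfl | hd3
  · rw [Nat.cast_ofNat]
    exact exp_neg_half_le hL hA
  rcases le_or_gt (d : ℝ) (log (2 * n)) with hdL | hLd
  · exact exp_neg_div_le_of_le (by exact_mod_cast hd3) hdL hA
  · exact exp_neg_log_div_le hN hLd.le (by exact_mod_cast hdn)
end

section
/- Let p be a real number with 0 < p < 1 and let d be a real number with d ≥ 2. Then the function f(x) = (p^{d-x} - p^d)/x is strictly increasing on the interval [1, d-1], where powers are real powers. -/
open Real Set

/-!
Since `p ^ (d - x) = p ^ d * (p⁻¹) ^ x`, the function is `p ^ d` times `x ↦ ((p⁻¹) ^ x - 1) / x`,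
the slope of the secant of the strictly convex function `x ↦ (p⁻¹) ^ x` through `0` and `x`;
secant slopes of a strictly convex function increase with the moving endpoint.
-/

lemma strictConvexOn_exp_mul {c : ℝ} (hc : c ≠ 0) :
    StrictConvexOn ℝ univ fun x => exp (c * x) := by
  refine ⟨convex_univ, fun x _ y _ hxy a b ha hb hab => ?_⟩
  have hcxy : c * x ≠ c * y := by simpa [hc] using hxy
  have := strictConvexOn_exp.2 (mem_univ _) (mem_univ _) hcxy ha hb hab
  simpa only [smul_eq_mul, mul_add, mul_left_comm c] using this

lemma strictConvexOn_rpow_left {b : ℝ} (hb₀ : 0 < b) (hb₁ : b ≠ 1) :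
    StrictConvexOn ℝ univ fun x : ℝ => b ^ x := by
  simpa only [rpow_def_of_pos hb₀] using
    strictConvexOn_exp_mul (log_ne_zero_of_pos_of_ne_one hb₀ hb₁)

lemma strictMonoOn_rpow_sub_one_div {b : ℝ} (hb₀ : 0 < b) (hb₁ : b ≠ 1) :
    StrictMonoOn (fun x : ℝ => (b ^ x - 1) / x) {0}ᶜ := by
  intro x hx y hy hxy
  simpa only [rpow_zero, sub_zero] using
    (strictConvexOn_rpow_left hb₀ hb₁).secant_strict_mono (a := 0) (mem_univ _) (mem_univ _)
      (mem_univ _) hx hy hxy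

lemma rpow_sub_sub_rpow {p : ℝ} (hp : 0 < p) (d x : ℝ) :
    p ^ (d - x) - p ^ d = p ^ d * ((p⁻¹) ^ x - 1) := by
  rw [rpow_sub hp, inv_rpow hp.le, mul_sub, mul_one, div_eq_mul_inv]

theorem f_strict_mono_general (p d : ℝ) (hp0 : 0 < p) (hp1 : p < 1) :
    StrictMonoOn (fun x : ℝ => (p ^ (d - x) - p ^ d) / x) (Set.Icc 1 (d - 1)) := by
  have hmono : StrictMonoOn (fun x : ℝ => p ^ d * (((p⁻¹) ^ x - 1) / x)) {0}ᶜ :=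
    (strictMono_mul_left_of_pos (rpow_pos_of_pos hp0 d)).comp_strictMonoOn
      (strictMonoOn_rpow_sub_one_div (inv_pos.2 hp0) (inv_ne_one.2 hp1.ne))
  have hsub : Icc 1 (d - 1) ⊆ {0}ᶜ := fun x hx => (zero_lt_one.trans_le hx.1).ne'
  simpa only [rpow_sub_sub_rpow hp0, mul_div_assoc] using hmono.mono hsub

theorem f_strict_mono (p d : ℝ) (hp0 : 0 < p) (hp1 : p < 1) (hd : 2 ≤ d) :
    StrictMonoOn (fun x : ℝ => (p ^ (d - x) - p ^ d) / x) (Set.Icc 1 (d - 1)) :=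
  f_strict_mono_general p d hp0 hp1
end

section
/- Let P be a finite set, let d ≥ 1 and k ≥ 1 be natural numbers with k·d ≤ |P|, and let S ⊆ P. Let 𝒯 be the set of k-tuples (e₁, …, e_k) of pairwise disjoint d-element subsets of P, and let 𝒯' ⊆ 𝒯 be those tuples in which no component is contained in S, i.e., e_j ⊄ S for all j. Then |𝒯'| · C(|P|, d)^k ≤ (C(|P|, d) - C(|S|, d))^k · |𝒯|. -/
/-!
Count ordered matchings by adding one edge at a time. For the family `𝒜` of `d`-subsets of `P`
not contained in `S`, let `N e` be the number of `k`-matchings of `𝒜` disjoint from `e`. Splitting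
off the first edge gives `|𝒜-matchings of size k+1| = ∑_{e ∈ 𝒜} N e`, while double counting gives
`∑_{|e| = d} N e = C(|P| - kd, d) · |𝒜-matchings of size k|`; the same two facts for all `d`-subsets
give `|T_{k+1}| = C(|P| - kd, d) · |T_k|`.

A permutation carrying `e` onto some `e₀ ⊆ S` and fixing everything outside `e ∪ e₀` keeps `P`
and the points of `P \ (e ∪ S)` in place, so it maps matchings disjoint from `e` injectively to
matchings disjoint from `e₀`. Hence `N` is largest on `d`-subsets of `S`, its average over them is at
least its average over all `d`-subsets, and every added edge costs a factor
`(C(|P|, d) - C(|S|, d)) / C(|P|, d)`.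
-/

open Finset

section

variable {α : Type*} [DecidableEq α]

def orderedMatchings (F : Finset (Finset α)) (k : ℕ) : Finset (Fin k → Finset α) :=
  {g ∈ Fintype.piFinset fun _ ↦ F | ∀ i j, i ≠ j → Disjoint (g i) (g j)}

def orderedMatchingsDisjoint (F : Finset (Finset α)) (k : ℕ) (e : Finset α) :
    Finset (Fin k → Finset α) :=
  {g ∈ orderedMatchings F k | ∀ i, Disjoint (g i) e}

section OrderedMatchings

variable {F G : Finset (Finset α)} {k : ℕ}

theorem mem_orderedMatchings {g : Fin k → Finset α} :
    g ∈ orderedMatchings F k ↔ (∀ i, g i ∈ F) ∧ ∀ i j, i ≠ j → Disjoint (g i) (g j) := by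
  simp [orderedMatchings]

theorem orderedMatchings_mono (hFG : F ⊆ G) : orderedMatchings F k ⊆ orderedMatchings G k :=
  fun _ hg ↦ mem_orderedMatchings.2
    ⟨fun i ↦ hFG ((mem_orderedMatchings.1 hg).1 i), (mem_orderedMatchings.1 hg).2⟩

theorem cons_mem_orderedMatchings {e : Finset α} {g : Fin k → Finset α} :
    Fin.cons e g ∈ orderedMatchings F (k + 1) ↔
      e ∈ F ∧ g ∈ orderedMatchingsDisjoint F k e := by
  simp [orderedMatchingsDisjoint, mem_orderedMatchings, Fin.forall_fin_succ, forall_and,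
    disjoint_comm (a := e)]
  tauto

theorem card_orderedMatchings_succ :
    #(orderedMatchings F (k + 1)) = ∑ e ∈ F, #(orderedMatchingsDisjoint F k e) := by
  rw [← card_sigma]
  refine card_bij' (fun f _ ↦ ⟨f 0, Fin.tail f⟩) (fun p _ ↦ Fin.cons p.1 p.2) ?_ ?_ ?_ ?_
  · intro f hf
    rw [← Fin.cons_self_tail f, cons_mem_orderedMatchings] at hf
    exact mem_sigma.2 hf
  · intro p hp
    exact cons_mem_orderedMatchings.2 (mem_sigma.1 hp)
  · intro f _
    exact Fin.cons_self_tail f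
  · intro p _
    simp

theorem card_filter_disjoint_powersetCard {P : Finset α} {d : ℕ} {g : Fin k → Finset α}
    (hg : g ∈ orderedMatchings (powersetCard d P) k) :
    #{e ∈ powersetCard d P | ∀ i, Disjoint (g i) e} = (#P - k * d).choose d := by
  obtain ⟨hgP, hdisj⟩ := mem_orderedMatchings.1 hg
  simp only [mem_powersetCard] at hgP
  have hunion : #(univ.biUnion g) = k * d := by
    rw [card_biUnion fun i _ j _ hij ↦ hdisj i j hij]
    simp [fun i ↦ (hgP i).2]
  have hfilter : {e ∈ powersetCard d P | ∀ i, Disjoint (g i) e} =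
      powersetCard d (P \ univ.biUnion g) := by
    ext e
    simp only [mem_filter, mem_powersetCard, subset_sdiff, disjoint_comm (a := e),
      disjoint_biUnion_left, mem_univ, forall_const, and_right_comm]
  rw [hfilter, card_powersetCard, card_sdiff_of_subset (biUnion_subset.2 fun i _ ↦ (hgP i).1),
    hunion]

theorem sum_card_orderedMatchingsDisjoint_powersetCard {P : Finset α} {d : ℕ}
    (hF : F ⊆ powersetCard d P) :
    ∑ e ∈ powersetCard d P, #(orderedMatchingsDisjoint F k e) =
      (#P - k * d).choose d * #(orderedMatchings F k) := by
  calc ∑ e ∈ powersetCard d P, #(orderedMatchingsDisjoint F k e)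
      = ∑ g ∈ orderedMatchings F k, #{e ∈ powersetCard d P | ∀ i, Disjoint (g i) e} :=
        (sum_card_bipartiteAbove_eq_sum_card_bipartiteBelow _).symm
    _ = ∑ g ∈ orderedMatchings F k, (#P - k * d).choose d :=
        sum_congr rfl fun g hg ↦ card_filter_disjoint_powersetCard (orderedMatchings_mono hF hg)
    _ = (#P - k * d).choose d * #(orderedMatchings F k) := by
        rw [sum_const, smul_eq_mul, mul_comm]

theorem card_orderedMatchings_powersetCard_succ (P : Finset α) (d : ℕ) :
    #(orderedMatchings (powersetCard d P) (k + 1)) =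
      (#P - k * d).choose d * #(orderedMatchings (powersetCard d P) k) := by
  rw [card_orderedMatchings_succ, sum_card_orderedMatchingsDisjoint_powersetCard subset_rfl]

end OrderedMatchings

theorem Finset.exists_perm_map_eq_of_card_eq {s t : Finset α} (h : #s = #t) :
    ∃ σ : Equiv.Perm α, s.map σ.toEmbedding = t ∧ ∀ z ∉ s ∪ t, σ z = z := by
  have hcard : #(s.subtype (· ∈ s ∪ t)) = #(t.subtype (· ∈ s ∪ t)) := by
    rwa [card_subtype, card_subtype, filter_true_of_mem fun z hz ↦ mem_union_left t hz,
      filter_true_of_mem fun z hz ↦ mem_union_right s hz]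
  obtain ⟨τ, hτ⟩ := Equiv.Perm.exists_map_finset_eq _ _ hcard
  refine ⟨Equiv.Perm.ofSubtype τ, eq_of_subset_of_card_le ?_ (by simp [h]),
    fun z hz ↦ Equiv.Perm.ofSubtype_apply_of_not_mem τ hz⟩
  intro y hy
  obtain ⟨z, hz, rfl⟩ := mem_map.1 hy
  have hzst : z ∈ s ∪ t := mem_union_left t hz
  have : τ ⟨z, hzst⟩ ∈ t.subtype (· ∈ s ∪ t) := hτ ▸ mem_map_of_mem _ (mem_subtype.2 hz)
  simpa [Equiv.Perm.ofSubtype_apply_of_mem τ hzst] using this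

section NotSubset

variable {P S : Finset α} {d k : ℕ}

theorem card_orderedMatchingsDisjoint_le_map (σ : Equiv.Perm α) {e : Finset α}
    (hσP : ∀ z ∈ P, σ z ∈ P) (hσS : ∀ z ∈ P, z ∉ e → z ∉ S → σ z ∉ S) :
    #(orderedMatchingsDisjoint {f ∈ powersetCard d P | ¬ f ⊆ S} k e) ≤
      #(orderedMatchingsDisjoint {f ∈ powersetCard d P | ¬ f ⊆ S} k (e.map σ.toEmbedding)) := by
  refine card_le_card_of_injOn (fun g i ↦ (g i).map σ.toEmbedding) (fun g hg ↦ ?_)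
    fun g _ g' _ hgg' ↦ funext fun i ↦ map_injective _ (congrFun hgg' i)
  simp only [orderedMatchingsDisjoint, coe_filter, Set.mem_ofPred_eq, mem_orderedMatchings,
    mem_filter, mem_powersetCard, disjoint_map] at hg ⊢
  obtain ⟨⟨hgF, hdisj⟩, hge⟩ := hg
  refine ⟨⟨fun i ↦ ⟨⟨?_, by rw [card_map, (hgF i).1.2]⟩, ?_⟩, hdisj⟩, hge⟩
  · intro y hy
    obtain ⟨z, hz, rfl⟩ := mem_map.1 hy
    exact hσP z ((hgF i).1.1 hz)
  · intro hsub
    obtain ⟨z, hz, hzS⟩ := not_subset.1 (hgF i).2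
    exact hσS z ((hgF i).1.1 hz) (disjoint_left.1 (hge i) hz) hzS (hsub (mem_map_of_mem _ hz))

theorem card_orderedMatchingsDisjoint_le_of_subset (hSP : S ⊆ P) {e e₀ : Finset α}
    (he : e ⊆ P) (he₀ : e₀ ⊆ S) (hcard : #e = #e₀) :
    #(orderedMatchingsDisjoint {f ∈ powersetCard d P | ¬ f ⊆ S} k e) ≤
      #(orderedMatchingsDisjoint {f ∈ powersetCard d P | ¬ f ⊆ S} k e₀) := by
  obtain ⟨σ, rfl, hσfix⟩ := exists_perm_map_eq_of_card_eq hcard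
  -- `σ` fixes the complement of `e ∪ σ e` pointwise, so it maps `e ∪ σ e` into itself.
  have hσU : ∀ z ∈ e ∪ e.map σ.toEmbedding, σ z ∈ e ∪ e.map σ.toEmbedding := fun z hz ↦
    by_contra fun h ↦ h ((σ.injective (hσfix _ h)).symm ▸ hz)
  refine card_orderedMatchingsDisjoint_le_map σ (fun z hz ↦ ?_) fun z _ hze hzS ↦ ?_
  · by_cases hzU : z ∈ e ∪ e.map σ.toEmbedding
    · exact union_subset he (he₀.trans hSP) (hσU z hzU)
    · rwa [hσfix z hzU]
  · rwa [hσfix z (notMem_union.2 ⟨hze, fun h ↦ hzS (he₀ h)⟩)]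

theorem choose_mul_sum_card_orderedMatchingsDisjoint_le (hSP : S ⊆ P) :
    (#S).choose d * ∑ e ∈ powersetCard d P,
        #(orderedMatchingsDisjoint {f ∈ powersetCard d P | ¬ f ⊆ S} k e) ≤
      (#P).choose d * ∑ e ∈ powersetCard d S,
        #(orderedMatchingsDisjoint {f ∈ powersetCard d P | ¬ f ⊆ S} k e) := by
  rw [← card_powersetCard, ← card_powersetCard, ← smul_eq_mul, ← sum_const, mul_sum]
  refine sum_le_sum fun e₀ he₀ ↦ ?_
  rw [← smul_eq_mul, ← sum_const]
  refine sum_le_sum fun e he ↦ ?_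
  rw [mem_powersetCard] at he he₀
  exact card_orderedMatchingsDisjoint_le_of_subset hSP he.1 he₀.1 (he.2.trans he₀.2.symm)

theorem filter_powersetCard_subset_eq (hSP : S ⊆ P) :
    {e ∈ powersetCard d P | e ⊆ S} = powersetCard d S := by
  ext e
  simp only [mem_filter, mem_powersetCard]
  exact ⟨fun h ↦ ⟨h.2, h.1.2⟩, fun h ↦ ⟨⟨h.1.trans hSP, h.2⟩, h.1⟩⟩

theorem card_orderedMatchings_succ_mul_le (hSP : S ⊆ P) :
    #(orderedMatchings {f ∈ powersetCard d P | ¬ f ⊆ S} (k + 1)) * (#P).choose d ≤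
      ((#P).choose d - (#S).choose d) *
        ((#P - k * d).choose d * #(orderedMatchings {f ∈ powersetCard d P | ¬ f ⊆ S} k)) := by
  set N := fun e ↦ #(orderedMatchingsDisjoint {f ∈ powersetCard d P | ¬ f ⊆ S} k e)
  have hsplit : ∑ e ∈ powersetCard d P, N e =
      #(orderedMatchings {f ∈ powersetCard d P | ¬ f ⊆ S} (k + 1)) +
        ∑ e ∈ powersetCard d S, N e := by
    rw [card_orderedMatchings_succ, ← filter_powersetCard_subset_eq hSP,
      sum_filter_not_add_sum_filter]
  have htotal : ∑ e ∈ powersetCard d P, N e =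
      (#P - k * d).choose d * #(orderedMatchings {f ∈ powersetCard d P | ¬ f ⊆ S} k) :=
    sum_card_orderedMatchingsDisjoint_powersetCard (filter_subset _ _)
  have haverage := choose_mul_sum_card_orderedMatchingsDisjoint_le (d := d) (k := k) hSP
  rw [← htotal, Nat.sub_mul]
  refine Nat.le_sub_of_add_le ?_
  calc _ ≤ #(orderedMatchings {f ∈ powersetCard d P | ¬ f ⊆ S} (k + 1)) * (#P).choose d +
        (#P).choose d * ∑ e ∈ powersetCard d S, N e := Nat.add_le_add_left haverage _
    _ = (#P).choose d * ∑ e ∈ powersetCard d P, N e := by rw [hsplit]; ring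

theorem card_orderedMatchings_mul_pow_le (hSP : S ⊆ P) :
    #(orderedMatchings {f ∈ powersetCard d P | ¬ f ⊆ S} k) * (#P).choose d ^ k ≤
      ((#P).choose d - (#S).choose d) ^ k * #(orderedMatchings (powersetCard d P) k) := by
  induction k with
  | zero => simpa using card_le_card (orderedMatchings_mono (filter_subset _ _))
  | succ k ih =>
    calc _ = #(orderedMatchings {f ∈ powersetCard d P | ¬ f ⊆ S} (k + 1)) * (#P).choose d *
          (#P).choose d ^ k := by ring
      _ ≤ ((#P).choose d - (#S).choose d) * ((#P - k * d).choose d *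
          #(orderedMatchings {f ∈ powersetCard d P | ¬ f ⊆ S} k)) * (#P).choose d ^ k :=
        Nat.mul_le_mul_right _ (card_orderedMatchings_succ_mul_le hSP)
      _ = ((#P).choose d - (#S).choose d) * (#P - k * d).choose d *
          (#(orderedMatchings {f ∈ powersetCard d P | ¬ f ⊆ S} k) * (#P).choose d ^ k) := by ring
      _ ≤ ((#P).choose d - (#S).choose d) * (#P - k * d).choose d *
          (((#P).choose d - (#S).choose d) ^ k * #(orderedMatchings (powersetCard d P) k)) :=
        Nat.mul_le_mul_left _ ih
      _ = _ := by rw [card_orderedMatchings_powersetCard_succ]; ring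

end NotSubset

end

theorem uniform_edges_count_general {α : Type*}
    (P : Finset α) (d k : ℕ)
    (S : Finset α) (hS : S ⊆ P)
    (T T' : Set (Fin k → Finset α))
    (hT : T = {f | (∀ j, f j ⊆ P ∧ (f j).card = d) ∧
      ∀ i j, i ≠ j → Disjoint (f i) (f j)})
    (hT' : T' = {f ∈ T | ∀ j, ¬ f j ⊆ S}) :
    T'.ncard * (P.card.choose d) ^ k ≤
      (P.card.choose d - S.card.choose d) ^ k * T.ncard := by
  classical
  have hT_eq : T = orderedMatchings (powersetCard d P) k := by
    ext f
    simp [hT, mem_orderedMatchings]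
  have hT'_eq : T' = orderedMatchings {f ∈ powersetCard d P | ¬ f ⊆ S} k := by
    ext f
    simp [hT', hT_eq, mem_orderedMatchings, forall_and]
    tauto
  rw [hT_eq, hT'_eq, Set.ncard_coe_finset, Set.ncard_coe_finset]
  exact card_orderedMatchings_mul_pow_le hS

theorem uniform_edges_count {α : Type*} [DecidableEq α]
    (P : Finset α) (d k : ℕ) (hd : 1 ≤ d) (hk : 1 ≤ k) (hkd : k * d ≤ P.card)
    (S : Finset α) (hS : S ⊆ P)
    (T T' : Set (Fin k → Finset α))
    (hT : T = {f | (∀ j, f j ⊆ P ∧ (f j).card = d) ∧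
      ∀ i j, i ≠ j → Disjoint (f i) (f j)})
    (hT' : T' = {f ∈ T | ∀ j, ¬ f j ⊆ S}) :
    T'.ncard * (P.card.choose d) ^ k ≤
      (P.card.choose d - S.card.choose d) ^ k * T.ncard :=
  uniform_edges_count_general P d k S hS T T' hT hT'
end
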